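/- arXiv:1408.1859 — 2 statements merged into one kernel-verified Lean document; each statement's English description precedes it below -/
import Mathlib

section
/- Define T_n(x) = Σ_{k≥0} T(n,k) x^k ∈ ℚ[x] for n ≥ 1, and T_0(x) = 1, where T(n,k) is the number of permutations of [n] with exactly k exterior peaks. Then in the formal power series ring (ℚ[x])[[t]], (Σ_{n≥0} T_n(x) tⁿ/n!) · (Σ_{m≥0} (1-x)^m t^{2m}/(2m)! − Σ_{m≥0} (1-x)^m t^{2m+1}/(2m+1)!) = 1. (This is Gessel's formula Σ_{n≥0} T_n(x) tⁿ/n! = √(1-x)/(√(1-x)·cosh(√(1-x)t) − sinh(√(1-x)t)) with the denominator cleared and the common factor √(1-x) cancelled.) -/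
/-- The number of exterior peaks of a word given as a list: indices `i` (1-based) with
`1 < i < n` and `l_{i-1} < l_i > l_{i+1}`, or `i = 1` and `l_1 > l_2`. -/
def extPeaksList {α : Type*} [LinearOrder α] (l : List α) : ℕ :=
  ((l.zip (l.tail.zip l.tail.tail)).countP
      fun p => decide (p.1 < p.2.1 ∧ p.2.2 < p.2.1)) +
    (match l with
     | a :: b :: _ => if b < a then 1 else 0
     | _ => 0)

/-- The number of exterior peaks of a permutation of `[n]`. -/
def extPeaks {n : ℕ} (π : Equiv.Perm (Fin n)) : ℕ :=
  extPeaksList (List.ofFn fun i => (π i : ℕ))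

/-- `extPeakCount n k` is the number of permutations of `[n]` with exactly `k` exterior peaks. -/
noncomputable def extPeakCount (n k : ℕ) : ℕ :=
  Nat.card {π : Equiv.Perm (Fin n) // extPeaks π = k}

/-- `T_n(x) = ∑_{k≥0} T(n,k) xᵏ` for `n ≥ 1` and `T_0(x) = 1`.  (All terms with `k > n`
vanish, so the sum over `k ∈ range (n+1)` captures the full sum over `k ≥ 0`.) -/
noncomputable def Tpoly : ℕ → Polynomial ℚ
  | 0 => 1
  | (n + 1) => ∑ k ∈ Finset.range (n + 2),
      (extPeakCount (n + 1) k : Polynomial ℚ) * Polynomial.X ^ k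

/-!
Inserting the new largest letter `n + 1` into a permutation of `[n]` with `k` exterior peaks
keeps `k` peaks in `2k + 1` of the `n + 1` slots (at the end, at a peak, or right after one) and
creates one more peak in the other `n - 2k`. Hence
`T_{n+1} = (1 + n x) T_n + 2x(1-x) T_n'`. The coefficients `a_j` of the second series satisfy
`a_{j+1} = (j x - 1) a_j + 2x(1-x) a_j'`, so for the derivation `D = 2x(1-x) d/dx` the
coefficients `h_n = ∑ C(n,i) T_i a_{n-i}` of the product satisfy `h_{n+1} = n x h_n + D h_n`
with `h_0 = 1`, which forces `h_n = 0` for `n ≥ 1`.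
-/

open Finset Polynomial

section ExtPeaks

variable {α : Type*} [LinearOrder α]

namespace List

/-- Indices are 0-based, so `j = 0` is the first letter, which needs no left neighbour. -/
def IsExtPeak (l : List α) (j : ℕ) : Prop :=
  ∃ a ∈ l[j]?, (∃ b ∈ l[j + 1]?, b < a) ∧ (j = 0 ∨ ∃ c ∈ l[j - 1]?, c < a)

instance (l : List α) : DecidablePred l.IsExtPeak := fun _ => by
  unfold IsExtPeak; infer_instance

theorem IsExtPeak.succ_lt_length {l : List α} {j : ℕ} (h : l.IsExtPeak j) :
    j + 1 < l.length := by
  obtain ⟨a, -, ⟨b, hb, -⟩, -⟩ := h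
  exact (getElem?_eq_some_iff.1 hb).1

theorem IsExtPeak.not_succ {l : List α} {j : ℕ} (h : l.IsExtPeak j) :
    ¬ l.IsExtPeak (j + 1) := by
  rintro ⟨b, hb, -, _ | ⟨c, hc, hcb⟩⟩
  · omega
  obtain ⟨a, ha, ⟨b', hb', hba⟩, -⟩ := h
  rw [Nat.add_sub_cancel] at hc
  cases Option.mem_unique ha hc
  cases Option.mem_unique hb hb'
  exact lt_asymm hba hcb

theorem IsExtPeak.not_pred {l : List α} {p : ℕ} (h : l.IsExtPeak p) :
    ¬ (0 < p ∧ l.IsExtPeak (p - 1)) :=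
  fun ⟨hp, h'⟩ => h'.not_succ (by rwa [Nat.sub_add_cancel hp])

theorem isExtPeak_cons_zero (a b : α) (l : List α) :
    (a :: b :: l).IsExtPeak 0 ↔ b < a := by
  simp [IsExtPeak]

theorem isExtPeak_cons_one (a b c : α) (l : List α) :
    (a :: b :: c :: l).IsExtPeak 1 ↔ a < b ∧ c < b := by
  simp [IsExtPeak]; tauto

theorem isExtPeak_cons_add_two (a : α) (l : List α) (j : ℕ) :
    (a :: l).IsExtPeak (j + 2) ↔ l.IsExtPeak (j + 1) := by
  simp [IsExtPeak]

section insertIdx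

variable {l : List α} {M : α} {p : ℕ}

theorem isExtPeak_insertIdx_of_succ_lt {j : ℕ} (hj : j + 1 < p) :
    (l.insertIdx p M).IsExtPeak j ↔ l.IsExtPeak j := by
  simp only [IsExtPeak, getElem?_insertIdx_of_lt (by omega : j < p),
    getElem?_insertIdx_of_lt hj, getElem?_insertIdx_of_lt (by omega : j - 1 < p)]

theorem not_isExtPeak_insertIdx_pred (hp : p ≤ l.length) (hM : ∀ x ∈ l, x < M) (hp0 : 0 < p) :
    ¬ (l.insertIdx p M).IsExtPeak (p - 1) := by
  rintro ⟨a, ha, ⟨b, hb, hba⟩, -⟩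
  rw [Nat.sub_add_cancel hp0, getElem?_insertIdx_self, if_pos hp] at hb
  rw [getElem?_insertIdx_of_lt (by omega)] at ha
  cases Option.mem_some_iff.1 hb
  exact lt_asymm hba (hM a (mem_of_getElem? ha))

theorem isExtPeak_insertIdx_self (hp : p ≤ l.length) (hM : ∀ x ∈ l, x < M) :
    (l.insertIdx p M).IsExtPeak p ↔ p < l.length := by
  refine ⟨fun h => ?_, fun h => ?_⟩
  · have := h.succ_lt_length
    rw [length_insertIdx_of_le_length hp] at this
    omega
  refine ⟨M, by simp [getElem?_insertIdx_self, hp], ⟨l[p], ?_, hM _ (getElem_mem h)⟩, ?_⟩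
  · simp [getElem?_insertIdx_of_gt (by omega : p < p + 1), h]
  rcases Nat.eq_zero_or_pos p with hp0 | hp0
  · exact Or.inl hp0
  refine Or.inr ⟨l[p - 1], ?_, hM _ (getElem_mem (by omega))⟩
  simp [getElem?_insertIdx_of_lt (by omega : p - 1 < p), (by omega : p - 1 < l.length)]

theorem not_isExtPeak_insertIdx_succ (hp : p ≤ l.length) (hM : ∀ x ∈ l, x < M) :
    ¬ (l.insertIdx p M).IsExtPeak (p + 1) := by
  rintro ⟨a, ha, -, h | ⟨c, hc, hca⟩⟩
  · omega
  rw [Nat.add_sub_cancel, getElem?_insertIdx_self, if_pos hp] at hc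
  rw [getElem?_insertIdx_of_gt (by omega : p < p + 1), Nat.add_sub_cancel] at ha
  cases Option.mem_some_iff.1 hc
  exact lt_asymm hca (hM a (mem_of_getElem? ha))

theorem isExtPeak_insertIdx_of_add_two_le {j : ℕ} (hj : p + 2 ≤ j) :
    (l.insertIdx p M).IsExtPeak j ↔ l.IsExtPeak (j - 1) := by
  obtain ⟨i, rfl⟩ := Nat.exists_eq_add_of_le' (by omega : 1 ≤ j)
  have hi : i ≠ 0 := by omega
  simp only [IsExtPeak, getElem?_insertIdx_of_gt (by omega : p < i + 1),
    getElem?_insertIdx_of_gt (by omega : p < i + 1 + 1), Nat.add_sub_cancel,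
    getElem?_insertIdx_of_gt (by omega : p < i), Nat.add_one_ne_zero, hi, false_or]

end insertIdx

/-- Slot `p` is the gap just before index `p`; slot `l.length` is the end of the word. -/
def IsStableSlot (l : List α) (p : ℕ) : Prop :=
  p = l.length ∨ l.IsExtPeak p ∨ (0 < p ∧ l.IsExtPeak (p - 1))

instance (l : List α) : DecidablePred l.IsStableSlot := fun _ => by
  unfold IsStableSlot; infer_instance

end List

theorem extPeaksList_eq_sum :
    ∀ l : List α, extPeaksList l = ∑ j ∈ range l.length, if l.IsExtPeak j then 1 else 0
  | [] => rfl
  | [a] => by simp [extPeaksList, List.IsExtPeak]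
  | [a, b] => by
    simp only [List.length_cons, List.length_nil, zero_add, sum_range_succ]
    simp [extPeaksList, List.IsExtPeak]
  | a :: b :: c :: t => by
    have hcons : extPeaksList (a :: b :: c :: t) + (if c < b then 1 else 0) =
        extPeaksList (b :: c :: t) + (if b < a then 1 else 0) +
          (if a < b ∧ c < b then 1 else 0) := by
      simp only [extPeaksList, List.tail_cons, List.zip_cons_cons, List.countP_cons,
        Bool.decide_and, Bool.and_eq_true, decide_eq_true_eq]
      omega
    have ih := extPeaksList_eq_sum (b :: c :: t)
    simp only [List.length_cons, sum_range_succ' _ (t.length + 2),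
      sum_range_succ' _ (t.length + 1), zero_add, List.isExtPeak_cons_add_two,
      List.isExtPeak_cons_zero, List.isExtPeak_cons_one] at ih hcons ⊢
    omega

/-- A new maximum at slot `p` is a peak unless it comes last, and it destroys the peaks at
`p - 1` and `p`; all other peaks survive, shifted. -/
theorem extPeaksList_insertIdx_add {l : List α} {M : α} {p : ℕ} (hp : p ≤ l.length)
    (hM : ∀ x ∈ l, x < M) :
    extPeaksList (l.insertIdx p M) + (if 0 < p ∧ l.IsExtPeak (p - 1) then 1 else 0) +
        (if l.IsExtPeak p then 1 else 0) =
      extPeaksList l + if p < l.length then 1 else 0 := by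
  obtain ⟨m, hm⟩ := Nat.exists_eq_add_of_le hp
  rw [extPeaksList_eq_sum, extPeaksList_eq_sum, List.length_insertIdx_of_le_length hp, hm,
    show p + m + 1 = p + (m + 1) by omega, sum_range_add _ p (m + 1), sum_range_add _ p m,
    sum_range_succ']
  have left : (∑ j ∈ range p, if (l.insertIdx p M).IsExtPeak j then 1 else 0) +
      (if 0 < p ∧ l.IsExtPeak (p - 1) then 1 else 0) =
      ∑ j ∈ range p, if l.IsExtPeak j then 1 else 0 := by
    rcases p with _ | q
    · simp
    have hq := List.not_isExtPeak_insertIdx_pred hp hM q.succ_pos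
    rw [Nat.add_sub_cancel] at hq
    rw [sum_range_succ, sum_range_succ, Nat.add_sub_cancel, if_neg hq, sum_congr rfl fun j hj =>
      if_congr (List.isExtPeak_insertIdx_of_succ_lt (by simp at hj; omega)) rfl rfl]
    simp
  have right : (∑ i ∈ range m, if (l.insertIdx p M).IsExtPeak (p + (i + 1)) then 1 else 0) +
      (if l.IsExtPeak p then 1 else 0) =
      ∑ i ∈ range m, if l.IsExtPeak (p + i) then 1 else 0 := by
    rcases m with _ | m
    · have : ¬ l.IsExtPeak p := fun h => by have := h.succ_lt_length; omega
      simp [this]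
    have hgt : ∀ i, (l.insertIdx p M).IsExtPeak (p + (i + 1 + 1)) ↔ l.IsExtPeak (p + (i + 1)) :=
      fun i => List.isExtPeak_insertIdx_of_add_two_le (by omega)
    simp only [sum_range_succ', zero_add, add_zero, List.not_isExtPeak_insertIdx_succ hp hM, hgt]
    simp
  have mid : (if (l.insertIdx p M).IsExtPeak (p + 0) then 1 else 0) =
      if p < p + m then 1 else 0 := by
    simp only [add_zero, List.isExtPeak_insertIdx_self hp hM, hm]
  omega

theorem extPeaksList_insertIdx {l : List α} {M : α} {p : ℕ} (hp : p ≤ l.length)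
    (hM : ∀ x ∈ l, x < M) :
    extPeaksList (l.insertIdx p M) = extPeaksList l + if l.IsStableSlot p then 0 else 1 := by
  have h := extPeaksList_insertIdx_add hp hM
  by_cases hpk : l.IsExtPeak p
  · have hlt : p < l.length := by have := hpk.succ_lt_length; omega
    rw [if_pos hpk, if_neg hpk.not_pred, if_pos hlt] at h
    rw [if_pos (show l.IsStableSlot p from Or.inr (Or.inl hpk))]
    omega
  by_cases hpr : 0 < p ∧ l.IsExtPeak (p - 1)
  · have hlt : p < l.length := by have := hpr.2.succ_lt_length; omega
    rw [if_neg hpk, if_pos hpr, if_pos hlt] at h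
    rw [if_pos (show l.IsStableSlot p from Or.inr (Or.inr hpr))]
    omega
  rw [if_neg hpk, if_neg hpr] at h
  by_cases hlt : p < l.length
  · rw [if_pos hlt] at h
    rw [if_neg (show ¬ l.IsStableSlot p by
      rintro (h' | h' | h') <;> first | omega | contradiction)]
    omega
  · rw [if_neg hlt] at h
    rw [if_pos (show l.IsStableSlot p from Or.inl (by omega))]
    omega

theorem card_stableSlots (l : List α) :
    #{p ∈ range (l.length + 1) | l.IsStableSlot p} = 2 * extPeaksList l + 1 := by
  have hsplit : ∀ p, (if l.IsStableSlot p then 1 else 0) = (if p = l.length then 1 else 0) +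
      (if l.IsExtPeak p then 1 else 0) + (if 0 < p ∧ l.IsExtPeak (p - 1) then 1 else 0) := by
    intro p
    by_cases hpk : l.IsExtPeak p
    · have := hpk.succ_lt_length
      rw [if_pos (show l.IsStableSlot p from Or.inr (Or.inl hpk)), if_neg (by omega), if_pos hpk,
        if_neg hpk.not_pred]
    by_cases hpr : 0 < p ∧ l.IsExtPeak (p - 1)
    · have := hpr.2.succ_lt_length
      rw [if_pos (show l.IsStableSlot p from Or.inr (Or.inr hpr)), if_neg (by omega), if_neg hpk,
        if_pos hpr]
    rw [if_neg hpk, if_neg hpr, add_zero, add_zero]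
    exact if_congr (by simp [List.IsStableSlot, hpk, hpr]) rfl rfl
  rw [card_filter, sum_congr rfl fun p _ => hsplit p, sum_add_distrib, sum_add_distrib,
    sum_ite_eq', sum_range_succ (fun p => if l.IsExtPeak p then 1 else 0),
    sum_range_succ' (fun p => if 0 < p ∧ l.IsExtPeak (p - 1) then 1 else 0),
    ← extPeaksList_eq_sum]
  have : ¬ l.IsExtPeak l.length := fun h => by have := h.succ_lt_length; omega
  simp only [mem_range, lt_add_one, if_true, this, if_false, Nat.add_sub_cancel, Nat.succ_pos,
    true_and, lt_irrefl, false_and, ← extPeaksList_eq_sum]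
  ring

theorem two_mul_extPeaksList_le (l : List α) : 2 * extPeaksList l ≤ l.length := by
  have := card_filter_le (range (l.length + 1)) l.IsStableSlot
  rw [card_stableSlots, card_range] at this
  omega

end ExtPeaks

theorem List.ofFn_insertNth {β : Type*} :
    ∀ {n : ℕ} (p : Fin (n + 1)) (x : β) (f : Fin n → β),
      List.ofFn (Fin.insertNth p x f) = (List.ofFn f).insertIdx p x
  | 0, p, x, f => by
    obtain rfl := Fin.fin_one_eq_zero p
    simp [Fin.insertNth_zero']
  | n + 1, p, x, f => by
    cases p using Fin.cases with
    | zero => simp [Fin.insertNth_zero']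
    | succ q =>
      conv_lhs => rw [← Fin.cons_self_tail f, Fin.insertNth_succ_cons, List.ofFn_succ]
      rw [List.ofFn_succ (f := f), Fin.val_succ, List.insertIdx_succ_cons, Fin.cons_zero]
      simp only [Fin.cons_succ]
      rw [List.ofFn_insertNth q x (Fin.tail f)]
      rfl

namespace Equiv.Perm

/-- The permutation of `[n + 1]` whose word is that of `σ` with the letter `n + 1` inserted at
position `p`. -/
def insertMax {n : ℕ} (σ : Perm (Fin n)) (p : Fin (n + 1)) : Perm (Fin (n + 1)) :=
  (finSuccEquiv' p).trans (σ.optionCongr.trans (finSuccEquiv' (Fin.last n)).symm)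

theorem insertMax_apply_self {n : ℕ} (σ : Perm (Fin n)) (p : Fin (n + 1)) :
    insertMax σ p p = Fin.last n := by
  simp [insertMax]

theorem insertMax_apply_succAbove {n : ℕ} (σ : Perm (Fin n)) (p : Fin (n + 1)) (j : Fin n) :
    insertMax σ p (p.succAbove j) = (σ j).castSucc := by
  simp [insertMax, Fin.succAbove_last]

theorem ofFn_insertMax {n : ℕ} (σ : Perm (Fin n)) (p : Fin (n + 1)) :
    List.ofFn (fun i => (insertMax σ p i : ℕ)) =
      (List.ofFn fun j => (σ j : ℕ)).insertIdx p n := by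
  rw [← List.ofFn_insertNth]
  congr 1
  refine (Fin.insertNth_eq_iff.2 ⟨?_, ?_⟩).symm
  · simp [insertMax_apply_self]
  · ext j
    simp [Fin.removeNth_apply, insertMax_apply_succAbove]

theorem insertMax_bijective {n : ℕ} :
    Function.Bijective fun x : Perm (Fin n) × Fin (n + 1) => insertMax x.1 x.2 := by
  refine (Fintype.bijective_iff_injective_and_card _).2 ⟨?_, ?_⟩
  · rintro ⟨σ, p⟩ ⟨τ, q⟩ h
    dsimp only at h
    obtain rfl : p = q := (insertMax σ p).injective <| by
      rw [insertMax_apply_self, h, insertMax_apply_self]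
    refine Prod.ext (Equiv.ext fun j => Fin.castSucc_injective n ?_) rfl
    rw [← insertMax_apply_succAbove, ← insertMax_apply_succAbove, h]
  · simp [Fintype.card_prod, Fintype.card_perm, Fintype.card_fin, Nat.factorial_succ, mul_comm]

end Equiv.Perm

open Equiv

theorem extPeaks_insertMax {n : ℕ} (σ : Perm (Fin n)) (p : Fin (n + 1)) :
    extPeaks (σ.insertMax p) =
      extPeaks σ + if (List.ofFn fun j => (σ j : ℕ)).IsStableSlot p then 0 else 1 := by
  rw [extPeaks, Perm.ofFn_insertMax, extPeaksList_insertIdx (by simp [p.is_le])]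
  · rfl
  · simp [List.mem_ofFn]

theorem two_mul_extPeaks_le {n : ℕ} (σ : Perm (Fin n)) : 2 * extPeaks σ ≤ n := by
  simpa [extPeaks] using two_mul_extPeaksList_le (List.ofFn fun i => (σ i : ℕ))

theorem Tpoly_eq_sum (n : ℕ) : Tpoly n = ∑ σ : Perm (Fin n), (X : ℚ[X]) ^ extPeaks σ := by
  cases n with
  | zero => simp [Tpoly, extPeaks, extPeaksList]
  | succ n =>
    rw [Tpoly, ← sum_fiberwise_of_maps_to (g := extPeaks) (t := range (n + 2))
      fun σ _ => mem_range.2 (by have := two_mul_extPeaks_le σ; omega)]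
    refine sum_congr rfl fun k _ => ?_
    rw [sum_congr rfl fun σ hσ => by rw [(mem_filter.1 hσ).2], sum_const, nsmul_eq_mul,
      extPeakCount, Nat.card_eq_fintype_card, Fintype.card_subtype]

theorem sum_X_pow_extPeaks_insertMax {n : ℕ} (σ : Perm (Fin n)) :
    ∑ p : Fin (n + 1), (X : ℚ[X]) ^ extPeaks (σ.insertMax p) =
      (1 + (n : ℚ[X]) * X) * X ^ extPeaks σ +
        2 * X * (1 - X) * derivative (X ^ extPeaks σ) := by
  simp only [extPeaks_insertMax]
  set l := List.ofFn fun j => (σ j : ℕ)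
  have hk := two_mul_extPeaks_le σ
  have hstable : #{p ∈ range (n + 1) | l.IsStableSlot p} = 2 * extPeaks σ + 1 := by
    simpa [l, extPeaks] using card_stableSlots l
  have hunstable : #{p ∈ range (n + 1) | ¬ l.IsStableSlot p} = n - 2 * extPeaks σ := by
    rw [filter_not, card_sdiff_of_subset (filter_subset _ _), hstable, card_range]
    omega
  rw [Fin.sum_univ_eq_sum_range
    (fun p => (X : ℚ[X]) ^ (extPeaks σ + if l.IsStableSlot p then 0 else 1))]
  simp only [apply_ite (fun e => (X : ℚ[X]) ^ (extPeaks σ + e)), add_zero]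
  rw [sum_ite, sum_const, sum_const, hstable, hunstable, nsmul_eq_mul, nsmul_eq_mul,
    derivative_X_pow, C_eq_natCast, Nat.cast_sub hk]
  rcases extPeaks σ with _ | k
  · simp
  · push_cast
    ring

theorem Tpoly_succ (n : ℕ) :
    Tpoly (n + 1) = (1 + (n : ℚ[X]) * X) * Tpoly n + 2 * X * (1 - X) * derivative (Tpoly n) := by
  rw [Tpoly_eq_sum, Tpoly_eq_sum,
    ← Perm.insertMax_bijective.sum_comp (fun π => (X : ℚ[X]) ^ extPeaks π),
    Fintype.sum_prod_type, derivative_sum, mul_sum, mul_sum, ← sum_add_distrib]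
  exact sum_congr rfl fun σ _ => sum_X_pow_extPeaks_insertMax σ

section BinomialConvolution

def binomialConv {A : Type*} [Semiring A] (f g : ℕ → A) (n : ℕ) : A :=
  ∑ ij ∈ antidiagonal n, (n.choose ij.1 : A) * (f ij.1 * g ij.2)

open PowerSeries in
theorem mk_factorial_inv_smul_mul_mk {A : Type*} [Semiring A] [Algebra ℚ A] (f g : ℕ → A) :
    mk (fun n => (n.factorial : ℚ)⁻¹ • f n) *
        mk (fun n => (n.factorial : ℚ)⁻¹ • g n) =
      mk fun n => (n.factorial : ℚ)⁻¹ • binomialConv f g n := by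
  ext n
  rw [PowerSeries.coeff_mul, coeff_mk, binomialConv, smul_sum]
  refine sum_congr rfl fun ⟨i, j⟩ hij => ?_
  obtain rfl : i + j = n := mem_antidiagonal.1 hij
  have hfact : ((i + j).factorial : ℚ)⁻¹ * (i + j).choose i =
      (i.factorial : ℚ)⁻¹ * (j.factorial : ℚ)⁻¹ := by
    have hchoose : ((i + j).choose j : ℚ) ≠ 0 := mod_cast (Nat.choose_pos (by omega)).ne'
    rw [Nat.choose_symm_add, ← Nat.add_choose_mul_factorial_mul_factorial i j]
    push_cast
    field_simp
  simp only [coeff_mk]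
  rw [smul_mul_smul, ← hfact, mul_smul, Nat.cast_smul_eq_nsmul ℚ, nsmul_eq_mul]

variable {R A : Type*} [CommRing R] [CommRing A] [Algebra R A] (D : Derivation R A A) (c : A)
  {f g : ℕ → A}

theorem binomialConv_succ (hf : ∀ n, f (n + 1) = (1 + n * c) * f n + D (f n))
    (hg : ∀ n, g (n + 1) = (n * c - 1) * g n + D (g n)) (n : ℕ) :
    binomialConv f g (n + 1) = n * c * binomialConv f g n + D (binomialConv f g n) := by
  rw [binomialConv, sum_antidiagonal_choose_succ_mul (fun i j => f i * g j) n, binomialConv,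
    map_sum, mul_sum, ← sum_add_distrib, ← sum_add_distrib]
  refine sum_congr rfl fun ⟨i, j⟩ hij => ?_
  have hij : i + j = n := mem_antidiagonal.1 hij
  have hn : (i : A) + j = n := by rw [← Nat.cast_add, hij]
  rw [← Nat.choose_symm_of_eq_add hij.symm, hf, hg, D.leibniz, D.leibniz, D.map_natCast]
  simp only [smul_eq_mul, mul_zero, add_zero]
  linear_combination ((n.choose i : A) * f i * g j * c) * hn

theorem binomialConv_eq_ite (hf : ∀ n, f (n + 1) = (1 + n * c) * f n + D (f n))
    (hg : ∀ n, g (n + 1) = (n * c - 1) * g n + D (g n)) (hf0 : f 0 = 1) (hg0 : g 0 = 1)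
    (n : ℕ) :
    binomialConv f g n = if n = 0 then 1 else 0 := by
  induction n with
  | zero => simp [binomialConv, hf0, hg0]
  | succ m ih =>
    rw [binomialConv_succ D c hf hg, ih, if_neg m.succ_ne_zero]
    split_ifs with hm <;> simp [hm]

end BinomialConvolution

theorem one_sub_X_mul_derivative_one_sub_X_pow {R : Type*} [CommRing R] (m : ℕ) :
    (1 - X) * derivative ((1 - X : R[X]) ^ m) = -(m : R[X]) * (1 - X) ^ m := by
  rcases m with _ | m
  · simp
  · rw [derivative_pow, C_eq_natCast, derivative_sub, derivative_one, derivative_X,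
      Nat.add_sub_cancel, pow_succ]
    push_cast
    ring

/-- `j!` times the `tʲ`-coefficient of `cosh (u t) - sinh (u t) / u`, where `u² = 1 - x`. -/
noncomputable def denomCoeff (j : ℕ) : ℚ[X] :=
  (if Even j then (1 : ℚ) else -1) • (1 - X) ^ (j / 2)

theorem denomCoeff_two_mul (m : ℕ) : denomCoeff (2 * m) = (1 - X) ^ m := by
  simp [denomCoeff]

theorem denomCoeff_two_mul_add_one (m : ℕ) : denomCoeff (2 * m + 1) = -(1 - X) ^ m := by
  simp [denomCoeff, show (2 * m + 1) / 2 = m by omega]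

theorem denomCoeff_succ (j : ℕ) :
    denomCoeff (j + 1) =
      ((j : ℚ[X]) * X - 1) * denomCoeff j + 2 * X * (1 - X) * derivative (denomCoeff j) := by
  obtain ⟨m, rfl | rfl⟩ := Nat.even_or_odd' j
  · rw [denomCoeff_two_mul_add_one, denomCoeff_two_mul]
    push_cast
    linear_combination (-2 * X) * one_sub_X_mul_derivative_one_sub_X_pow (R := ℚ) m
  · rw [show 2 * m + 1 + 1 = 2 * (m + 1) by ring, denomCoeff_two_mul, denomCoeff_two_mul_add_one,
      derivative_neg]
    push_cast
    linear_combination (2 * X) * one_sub_X_mul_derivative_one_sub_X_pow (R := ℚ) m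

/-- Gessel's formula, with the denominator cleared:
`(∑_{n≥0} T_n(x) tⁿ/n!) · (∑_m (1-x)^m t^{2m}/(2m)! − ∑_m (1-x)^m t^{2m+1}/(2m+1)!) = 1`. -/
theorem stmt14 :
    (PowerSeries.mk fun n => ((n.factorial : ℚ)⁻¹) • Tpoly n) *
        (PowerSeries.mk fun j =>
          ((if Even j then (1 : ℚ) else -1) * (j.factorial : ℚ)⁻¹) •
            ((1 - Polynomial.X : Polynomial ℚ) ^ (j / 2))) = 1 := by
  let D : Derivation ℚ ℚ[X] ℚ[X] := (2 * X * (1 - X) : ℚ[X]) • derivative'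
  have hD (p : ℚ[X]) : D p = 2 * X * (1 - X) * derivative p := rfl
  have hconv := binomialConv_eq_ite D X (f := Tpoly) (g := denomCoeff)
    (fun n => by rw [hD, Tpoly_succ]) (fun j => by rw [hD, denomCoeff_succ]) rfl
    (by simp [denomCoeff])
  have hdenom : (PowerSeries.mk fun j =>
      ((if Even j then (1 : ℚ) else -1) * (j.factorial : ℚ)⁻¹) •
        (1 - X : ℚ[X]) ^ (j / 2)) =
      PowerSeries.mk fun j => (j.factorial : ℚ)⁻¹ • denomCoeff j := by
    congr! 2 with j
    rw [denomCoeff, smul_smul, mul_comm]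
  rw [hdenom, mk_factorial_inv_smul_mul_mk]
  ext n
  rw [PowerSeries.coeff_mk, hconv, PowerSeries.coeff_one]
  split_ifs <;> simp [*]
end

section
/- Let D be the unique ℚ-linear derivation of the polynomial ring ℚ[x,y] satisfying D(x) = xy and D(y) = x². Then for every n ≥ 0, D^n(x) = Σ_T x^{m_e(T)} y^{m_o(T)}, where the sum runs over all increasing trees T on [n], m_e(T) is the number of vertices of T of even degree, and m_o(T) is the number of vertices of T of odd degree. -/
/-!
Write the monomial of a tree as `∏ v, φ (deg v)` with `φ k = x` for even `k` and `φ k = y` for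
odd `k`. The derivation rules say exactly `D (φ k) = x * φ (k + 1)`: differentiating the factor of
a vertex `w` flips the parity of `w` and creates a new leaf of degree `0`. By the Leibniz rule for
products, `D` of the monomial of a tree on `[n]` is therefore the sum of the monomials of the trees
on `[n + 1]` obtained by attaching the leaf `n + 1` to some vertex `w`, and every increasing tree on
`[n + 1]` arises this way exactly once.
-/

open MvPolynomial

/-- `deg p v` is the number of children of vertex `v` in the increasing tree on
`{0,1,…,n}` encoded by the parent function `p` (vertex `i+1` has parent `p i`). -/
def deg {n : ℕ} (p : Fin n → Fin (n + 1)) (v : Fin (n + 1)) : ℕ :=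
  (Finset.univ.filter fun i => p i = v).card

/-- The parent function encodes an increasing tree: each vertex's parent has a smaller
label. -/
def IsIncreasingTree {n : ℕ} (p : Fin n → Fin (n + 1)) : Prop :=
  ∀ i : Fin n, (p i : ℕ) ≤ (i : ℕ)

instance {n : ℕ} : DecidablePred (fun p : Fin n → Fin (n + 1) => IsIncreasingTree p) :=
  fun p => inferInstanceAs (Decidable (∀ i : Fin n, (p i : ℕ) ≤ (i : ℕ)))

theorem Derivation.leibniz_prod {R A M ι : Type*} [CommSemiring R] [CommSemiring A]
    [AddCommMonoid M] [Algebra R A] [Module A M] [Module R M] [DecidableEq ι]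
    (D : Derivation R A M) (s : Finset ι) (f : ι → A) :
    D (∏ i ∈ s, f i) = ∑ i ∈ s, (∏ j ∈ s.erase i, f j) • D (f i) := by
  induction s using Finset.induction_on with
  | empty => simp
  | insert a s ha ih =>
    have herase : ∀ i ∈ s, (insert a s).erase i = insert a (s.erase i) := fun i hi =>
      Finset.erase_insert_of_ne (ne_of_mem_of_not_mem hi ha).symm
    rw [Finset.prod_insert ha, leibniz, ih, Finset.sum_insert ha, Finset.erase_insert ha,
      Finset.smul_sum, add_comm]
    congr 1
    refine Finset.sum_congr rfl fun i hi => ?_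
    rw [herase i hi, Finset.prod_insert fun h => ha (Finset.mem_of_mem_erase h), mul_smul]

section Trees

variable {n : ℕ}

abbrev increasingTrees (n : ℕ) : Finset (Fin n → Fin (n + 1)) :=
  Finset.univ.filter fun p => IsIncreasingTree p

def attachLeaf (p : Fin n → Fin (n + 1)) (w : Fin (n + 1)) : Fin (n + 1) → Fin (n + 2) :=
  Fin.snoc (fun i => (p i).castSucc) w.castSucc

theorem attachLeaf_injective2 : Function.Injective2 (attachLeaf (n := n)) := by
  intro p q w u h
  obtain ⟨hpq, hwu⟩ := Fin.snoc_injective2 h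
  exact ⟨funext fun i => Fin.castSucc_injective _ (congrFun hpq i),
    Fin.castSucc_injective _ hwu⟩

theorem IsIncreasingTree.attachLeaf {p : Fin n → Fin (n + 1)} (hp : IsIncreasingTree p)
    (w : Fin (n + 1)) : IsIncreasingTree (attachLeaf p w) := by
  intro i
  induction i using Fin.lastCases with
  | last => simpa [_root_.attachLeaf] using Fin.is_le w
  | cast j => simpa [_root_.attachLeaf] using hp j

theorem IsIncreasingTree.exists_attachLeaf {p' : Fin (n + 1) → Fin (n + 2)}
    (hp' : IsIncreasingTree p') :
    ∃ p w, IsIncreasingTree p ∧ _root_.attachLeaf p w = p' := by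
  have hne : ∀ i, p' i ≠ Fin.last (n + 1) := fun i h => by
    have := hp' i
    rw [h, Fin.val_last] at this
    omega
  refine ⟨fun i => (p' i.castSucc).castPred (hne _), (p' (Fin.last n)).castPred (hne _),
    fun i => by simpa using hp' i.castSucc, ?_⟩
  simp only [_root_.attachLeaf, Fin.castSucc_castPred]
  exact Fin.snoc_init_self p'

theorem sum_increasingTrees_succ {M : Type*} [AddCommMonoid M]
    (f : (Fin (n + 1) → Fin (n + 2)) → M) :
    ∑ p' ∈ increasingTrees (n + 1), f p' =
      ∑ p ∈ increasingTrees n, ∑ w, f (attachLeaf p w) := by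
  rw [← Finset.sum_product']
  refine (Finset.sum_nbij (fun q : (Fin n → Fin (n + 1)) × Fin (n + 1) => attachLeaf q.1 q.2)
    ?_ ?_ ?_ fun _ _ => rfl).symm
  · rintro ⟨p, w⟩ hq
    simp only [Finset.mem_product, Finset.mem_filter, Finset.mem_univ, true_and] at hq ⊢
    exact hq.1.attachLeaf w
  · rintro ⟨p, w⟩ - ⟨q, u⟩ - h
    obtain ⟨rfl, rfl⟩ := attachLeaf_injective2 h
    rfl
  · intro p' hp'
    simp only [Finset.coe_filter, Finset.mem_univ, true_and, Set.mem_ofPred_eq] at hp'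
    obtain ⟨p, w, hp, rfl⟩ := hp'.exists_attachLeaf
    exact ⟨(p, w), by simpa using hp, rfl⟩

theorem deg_attachLeaf_last (p : Fin n → Fin (n + 1)) (w : Fin (n + 1)) :
    deg (attachLeaf p w) (Fin.last (n + 1)) = 0 := by
  rw [deg, Finset.card_filter, Fin.sum_univ_castSucc]
  simp [attachLeaf, (Fin.castSucc_lt_last _).ne]

theorem deg_attachLeaf_castSucc (p : Fin n → Fin (n + 1)) (w v : Fin (n + 1)) :
    deg (attachLeaf p w) v.castSucc = Function.update (deg p) w (deg p w + 1) v := by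
  rw [deg, deg, Finset.card_filter, Finset.card_filter, Fin.sum_univ_castSucc]
  simp only [attachLeaf, Fin.snoc_castSucc, Fin.snoc_last, Fin.castSucc_inj]
  rcases eq_or_ne v w with rfl | hvw
  · simp
  · simp [hvw, Ne.symm hvw, deg]

end Trees

section Weights

variable {A : Type*}

def parityVar (x y : A) (k : ℕ) : A :=
  if Even k then x else y

def treeWeight [CommMonoid A] (x y : A) {n : ℕ} (p : Fin n → Fin (n + 1)) : A :=
  ∏ v, parityVar x y (deg p v)

theorem treeWeight_eq_pow_mul_pow [CommMonoid A] (x y : A) {n : ℕ} (p : Fin n → Fin (n + 1)) :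
    treeWeight x y p =
      x ^ (Finset.univ.filter fun v => Even (deg p v)).card *
        y ^ (Finset.univ.filter fun v => ¬Even (deg p v)).card := by
  simp only [treeWeight, parityVar]
  rw [Finset.prod_ite, Finset.prod_const, Finset.prod_const]

theorem treeWeight_attachLeaf [CommMonoid A] (x y : A) {n : ℕ} (p : Fin n → Fin (n + 1))
    (w : Fin (n + 1)) :
    treeWeight x y (attachLeaf p w) =
      (∏ v ∈ Finset.univ.erase w, parityVar x y (deg p v)) *
        (x * parityVar x y (deg p w + 1)) := by
  rw [treeWeight, Fin.prod_univ_castSucc, deg_attachLeaf_last]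
  simp only [deg_attachLeaf_castSucc, Function.apply_update fun _ => parityVar x y]
  rw [Finset.prod_update_of_mem (Finset.mem_univ w), Finset.sdiff_singleton_eq_erase]
  simp only [parityVar, Even.zero, if_true]
  ac_rfl

end Weights

section Derivation

variable {R A : Type*} [CommSemiring R] [CommSemiring A] [Algebra R A] (D : Derivation R A A)
  {x y : A}

theorem Derivation.map_parityVar (hx : D x = x * y) (hy : D y = x ^ 2) (k : ℕ) :
    D (parityVar x y k) = x * parityVar x y (k + 1) := by
  by_cases hk : Even k
  · simp [parityVar, hk, Nat.even_add_one, hx]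
  · simp [parityVar, hk, Nat.even_add_one, hy, sq]

theorem Derivation.map_treeWeight (hx : D x = x * y) (hy : D y = x ^ 2) {n : ℕ}
    (p : Fin n → Fin (n + 1)) :
    D (treeWeight x y p) = ∑ w, treeWeight x y (attachLeaf p w) := by
  rw [treeWeight, D.leibniz_prod]
  simp only [treeWeight_attachLeaf, D.map_parityVar hx hy, smul_eq_mul]

theorem Derivation.iterate_eq_sum_treeWeight (hx : D x = x * y) (hy : D y = x ^ 2) (n : ℕ) :
    (⇑D)^[n] x = ∑ p ∈ increasingTrees n, treeWeight x y p := by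
  induction n with
  | zero => simp [increasingTrees, IsIncreasingTree, treeWeight, deg, parityVar]
  | succ n ih =>
    simp only [Function.iterate_succ_apply', ih, map_sum, D.map_treeWeight hx hy,
      sum_increasingTrees_succ]

end Derivation

theorem stmt18
    (D : Derivation ℚ (MvPolynomial (Fin 2) ℚ) (MvPolynomial (Fin 2) ℚ))
    (hx : D (X 0) = X 0 * X 1) (hy : D (X 1) = X 0 ^ 2) (n : ℕ) :
    (⇑D)^[n] (X 0) =
      ∑ p ∈ Finset.univ.filter (fun p : Fin n → Fin (n + 1) => IsIncreasingTree p),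
        X 0 ^ (Finset.univ.filter fun v => Even (deg p v)).card *
          X 1 ^ (Finset.univ.filter fun v => ¬Even (deg p v)).card := by
  simpa only [treeWeight_eq_pow_mul_pow] using D.iterate_eq_sum_treeWeight hx hy n
end
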